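/- Fix m ≥ 2. Let P(n,m) be the set of words of length 2n over a complementary alphabet with 2m letters admitting at least one valid plane tree, and S(n,m) the set of all words of length 2n. Then |P(n,m)| ≤ (2m)^n · C_n, and consequently |P(n,m)|/|S(n,m)| ≤ C_n / (2m)^n ≤ (1/(n+1)) · binom(2n,n)/4^n → 0 as n → ∞. -/

import Mathlib

/-!
Model: a plane tree with n edges is encoded as a non-crossing perfect matching
on the 2n half-edge positions `Fin (2*n)`; a matched pair (i,j) with i < j is
the edge e(i,j). A word of length 2n is a function `Fin (2*n) → A`.
-/

/-- `M` is a perfect matching on the positions `Fin (2*n)`. -/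
def IsMatchingF (n : ℕ) (M : Finset (Fin (2 * n) × Fin (2 * n))) : Prop :=
  (∀ p ∈ M, p.1 < p.2) ∧ (∀ k : Fin (2 * n), ∃! p, p ∈ M ∧ (p.1 = k ∨ p.2 = k))

/-- No two matched pairs cross. -/
def NonCrossingF (n : ℕ) (M : Finset (Fin (2 * n) × Fin (2 * n))) : Prop :=
  ∀ p ∈ M, ∀ q ∈ M, ¬ (p.1 < q.1 ∧ q.1 < p.2 ∧ p.2 < q.2)

/-- A plane tree on `n` edges: a non-crossing perfect matching. -/
def IsPlaneTreeF (n : ℕ) (M : Finset (Fin (2 * n) × Fin (2 * n))) : Prop :=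
  IsMatchingF n M ∧ NonCrossingF n M

/-- The plane tree `M` is valid for the word `P` (with complementation `comp`):
every matched pair consists of complementary letters. -/
def IsValidF {A : Type*} (n : ℕ) (P : Fin (2 * n) → A) (comp : A → A)
    (M : Finset (Fin (2 * n) × Fin (2 * n))) : Prop :=
  ∀ p ∈ M, P p.2 = comp (P p.1)


/-!
A valid word is determined by its plane tree together with its letters at the `n` left
endpoints, each right endpoint carrying the complement of its partner's letter; so each tree
carries at most `(2m)^n` words. A non-crossing perfect matching is determined by its set of
left endpoints, whose indicator is a Dyck word of semilength `n`; so there are at most `C_n`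
plane trees. Finally `(n + 1) C_n = binom(2n, n) ≤ 4^n ≤ (2m)^n` bounds the ratio by `1/(n+1)`.
-/

open scoped Finset

lemma List.count_take_ofFn {α : Type*} [DecidableEq α] {N : ℕ} (f : Fin N → α) (a : α)
    (k : ℕ) : ((List.ofFn f).take k).count a = #{i | f i = a ∧ i.val < k} := by
  have hcount (l : List α) : l.count a = (l.map fun x => if x = a then 1 else 0).sum := by
    induction l with
    | nil => rfl
    | cons x l ih => simp [List.count_cons, ih, add_comm]
  rw [hcount, List.map_take, List.map_ofFn, List.sum_take_ofFn, Function.comp_def,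
    Finset.sum_boole, Finset.filter_filter]
  simp [and_comm]

namespace DyckWord
open DyckStep

variable {N : ℕ}

lemma count_take_ofFn_ite_mem (S : Finset (Fin N)) (k : ℕ) :
    ((List.ofFn fun i => if i ∈ S then U else D).take k).count U = #{i | i ∈ S ∧ i.val < k} ∧
    ((List.ofFn fun i => if i ∈ S then U else D).take k).count D = #{i | i ∉ S ∧ i.val < k} := by
  simp only [List.count_take_ofFn]
  constructor <;> congr 1 <;> ext i <;> by_cases hi : i ∈ S <;> simp [hi]

def ofFinset (S : Finset (Fin N)) (h_card : 2 * #S = N)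
    (h_ballot : ∀ k, #{i | i ∉ S ∧ i.val < k} ≤ #{i | i ∈ S ∧ i.val < k}) : DyckWord where
  toList := List.ofFn fun i => if i ∈ S then U else D
  count_U_eq_count_D := by
    rw [← List.take_length (l := List.ofFn _), List.length_ofFn,
      (count_take_ofFn_ite_mem S N).1, (count_take_ofFn_ite_mem S N).2]
    simp only [Fin.is_lt, and_true, Finset.filter_mem_eq_inter, Finset.univ_inter,
      Finset.filter_not, Finset.card_sdiff_of_subset (Finset.subset_univ S), Finset.card_univ,
      Fintype.card_fin]
    omega
  count_D_le_count_U k := by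
    rw [(count_take_ofFn_ite_mem S k).1, (count_take_ofFn_ite_mem S k).2]
    exact h_ballot k

lemma semilength_ofFinset (S : Finset (Fin N)) (h_card) (h_ballot) :
    (ofFinset S h_card h_ballot).semilength = #S := by
  change (List.ofFn fun i => if i ∈ S then U else D).count U = #S
  rw [← List.take_length (l := List.ofFn _), List.length_ofFn, (count_take_ofFn_ite_mem S N).1]
  simp

lemma ofFinset_injective {S T : Finset (Fin N)} {hS hS' hT hT'}
    (h : ofFinset S hS hS' = ofFinset T hT hT') : S = T := by
  have hfun := List.ofFn_injective (congrArg toList h)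
  ext i
  have := congrFun hfun i
  by_cases hiS : i ∈ S <;> by_cases hiT : i ∈ T <;> simp_all

end DyckWord

namespace IsMatchingF

variable {n : ℕ} {M : Finset (Fin (2 * n) × Fin (2 * n))}

lemma eq_of_fst_eq (hM : IsMatchingF n M) {p q : Fin (2 * n) × Fin (2 * n)} (hp : p ∈ M)
    (hq : q ∈ M) (h : p.1 = q.1) : p = q :=
  (hM.2 p.1).unique ⟨hp, .inl rfl⟩ ⟨hq, .inl h.symm⟩

lemma eq_of_snd_eq (hM : IsMatchingF n M) {p q : Fin (2 * n) × Fin (2 * n)} (hp : p ∈ M)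
    (hq : q ∈ M) (h : p.2 = q.2) : p = q :=
  (hM.2 p.2).unique ⟨hp, .inr rfl⟩ ⟨hq, .inr h.symm⟩

lemma mem_image_snd_iff (hM : IsMatchingF n M) {k : Fin (2 * n)} :
    k ∈ M.image Prod.snd ↔ k ∉ M.image Prod.fst := by
  constructor
  · intro hk hk'
    obtain ⟨p, hp, rfl⟩ := Finset.mem_image.1 hk'
    obtain ⟨q, hq, hqp⟩ := Finset.mem_image.1 hk
    have hpq := (hM.2 p.1).unique ⟨hp, .inl rfl⟩ ⟨hq, .inr hqp⟩
    exact (hM.1 q hq).ne (hpq ▸ hqp.symm)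
  · intro hk
    obtain ⟨p, ⟨hp, hpk | hpk⟩, -⟩ := hM.2 k
    · exact absurd (Finset.mem_image.2 ⟨p, hp, hpk⟩) hk
    · exact Finset.mem_image.2 ⟨p, hp, hpk⟩

lemma card_image_fst (hM : IsMatchingF n M) : #(M.image Prod.fst) = n := by
  have hfst : #(M.image Prod.fst) = #M :=
    Finset.card_image_of_injOn fun p hp q hq => hM.eq_of_fst_eq hp hq
  have hsnd : #(M.image Prod.snd) = #M :=
    Finset.card_image_of_injOn fun p hp q hq => hM.eq_of_snd_eq hp hq
  have hcompl : M.image Prod.snd = (M.image Prod.fst)ᶜ := by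
    ext k; rw [hM.mem_image_snd_iff, Finset.mem_compl]
  have := Finset.card_compl (M.image Prod.fst)
  rw [← hcompl, Fintype.card_fin] at this
  omega

lemma card_closers_le_card_openers (hM : IsMatchingF n M) (k : ℕ) :
    #{i | i ∉ M.image Prod.fst ∧ i.val < k} ≤ #{i | i ∈ M.image Prod.fst ∧ i.val < k} := by
  set E := M.filter fun p => p.2.val < k
  calc #{i | i ∉ M.image Prod.fst ∧ i.val < k}
      ≤ #(E.image Prod.snd) := by
        refine Finset.card_le_card fun i hi => ?_
        obtain ⟨hi, hik⟩ := (Finset.mem_filter.1 hi).2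
        obtain ⟨p, hp, rfl⟩ := Finset.mem_image.1 (hM.mem_image_snd_iff.2 hi)
        exact Finset.mem_image.2 ⟨p, Finset.mem_filter.2 ⟨hp, hik⟩, rfl⟩
    _ ≤ #E := Finset.card_image_le
    _ = #(E.image Prod.fst) := (Finset.card_image_of_injOn fun p hp q hq =>
        hM.eq_of_fst_eq (Finset.mem_filter.1 hp).1 (Finset.mem_filter.1 hq).1).symm
    _ ≤ #{i | i ∈ M.image Prod.fst ∧ i.val < k} := by
        refine Finset.card_le_card fun i hi => ?_
        obtain ⟨p, hp, rfl⟩ := Finset.mem_image.1 hi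
        obtain ⟨hpM, hpk⟩ := Finset.mem_filter.1 hp
        have := hM.1 p hpM
        exact Finset.mem_filter.2 ⟨Finset.mem_univ _, Finset.mem_image_of_mem _ hpM, by omega⟩

noncomputable def toDyckWord (hM : IsMatchingF n M) : DyckWord :=
  DyckWord.ofFinset (M.image Prod.fst) (by rw [hM.card_image_fst]) hM.card_closers_le_card_openers

lemma semilength_toDyckWord (hM : IsMatchingF n M) : hM.toDyckWord.semilength = n := by
  rw [toDyckWord, DyckWord.semilength_ofFinset, hM.card_image_fst]

lemma image_fst_eq_of_toDyckWord_eq {M' : Finset (Fin (2 * n) × Fin (2 * n))}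
    (hM : IsMatchingF n M) (hM' : IsMatchingF n M') (h : hM.toDyckWord = hM'.toDyckWord) :
    M.image Prod.fst = M'.image Prod.fst :=
  DyckWord.ofFinset_injective h

end IsMatchingF

namespace IsPlaneTreeF

variable {n : ℕ}

/- Strong induction on the common closer `j`: if `i < i'`, non-crossing forces the opener `i'`
to close in `M` strictly before `j`, hence by induction also in `M'`, where it closes at `j`. -/
lemma fst_eq_of_mem_of_mem (j : Fin (2 * n)) :
    ∀ {M M' : Finset (Fin (2 * n) × Fin (2 * n))}, IsPlaneTreeF n M → IsPlaneTreeF n M' →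
      M.image Prod.fst = M'.image Prod.fst →
      ∀ {i i' : Fin (2 * n)}, (i, j) ∈ M → (i', j) ∈ M' → i = i' := by
  induction j using WellFoundedLT.induction with
  | _ j ih =>
  have opener_not_lt : ∀ {M M' : Finset (Fin (2 * n) × Fin (2 * n))}, IsPlaneTreeF n M →
      IsPlaneTreeF n M' → M.image Prod.fst = M'.image Prod.fst →
      ∀ {i i' : Fin (2 * n)}, (i, j) ∈ M → (i', j) ∈ M' → ¬ i < i' := by
    intro M M' hM hM' hL i i' hij hi'j hii'
    obtain ⟨q, hq, hqi'⟩ := Finset.mem_image.1 (hL ▸ Finset.mem_image_of_mem Prod.fst hi'j :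
      i' ∈ M.image Prod.fst)
    have hi'_lt_j : i' < j := hM'.1.1 _ hi'j
    have hq_lt_j : q.2 < j := by
      refine lt_of_le_of_ne (not_lt.1 fun h => hM.2 _ hij _ hq ⟨?_, ?_, h⟩) fun h => ?_
      · rwa [hqi']
      · rwa [hqi']
      · exact hii'.ne ((congrArg Prod.fst (hM.1.eq_of_snd_eq hq hij h)).symm.trans hqi')
    have hq_closer : q.2 ∈ M'.image Prod.snd := by
      rw [hM'.1.mem_image_snd_iff, ← hL, ← hM.1.mem_image_snd_iff]
      exact Finset.mem_image_of_mem Prod.snd hq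
    obtain ⟨r, hr, hrq⟩ := Finset.mem_image.1 hq_closer
    have hqr : q.1 = r.1 := ih q.2 hq_lt_j hM hM' hL (by simpa using hq) (by simpa [← hrq] using hr)
    have := hM'.1.eq_of_fst_eq hr hi'j (by simp [← hqr, hqi'])
    exact (hq_lt_j.trans_eq (congrArg Prod.snd this).symm).ne' hrq
  intro M M' hM hM' hL i i' hij hi'j
  exact le_antisymm (not_lt.1 (opener_not_lt hM' hM hL.symm hi'j hij))
    (not_lt.1 (opener_not_lt hM hM' hL hij hi'j))

lemma eq_of_image_fst_eq {M M' : Finset (Fin (2 * n) × Fin (2 * n))} (hM : IsPlaneTreeF n M)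
    (hM' : IsPlaneTreeF n M') (hL : M.image Prod.fst = M'.image Prod.fst) : M = M' := by
  have hsubset : ∀ {M M' : Finset (Fin (2 * n) × Fin (2 * n))}, IsPlaneTreeF n M →
      IsPlaneTreeF n M' → M.image Prod.fst = M'.image Prod.fst → M ⊆ M' := by
    intro M M' hM hM' hL p hp
    have hp_closer : p.2 ∈ M'.image Prod.snd := by
      rw [hM'.1.mem_image_snd_iff, ← hL, ← hM.1.mem_image_snd_iff]
      exact Finset.mem_image_of_mem Prod.snd hp
    obtain ⟨q, hq, hqp⟩ := Finset.mem_image.1 hp_closer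
    have : p.1 = q.1 := fst_eq_of_mem_of_mem p.2 hM hM' hL hp (by simpa [← hqp] using hq)
    exact Prod.ext this hqp.symm ▸ hq
  exact (hsubset hM hM' hL).antisymm (hsubset hM' hM hL.symm)

end IsPlaneTreeF

lemma card_planeTrees_le_catalan (n : ℕ) : Nat.card {M // IsPlaneTreeF n M} ≤ catalan n := by
  let toDyck (M : {M // IsPlaneTreeF n M}) : {p : DyckWord // p.semilength = n} :=
    ⟨M.2.1.toDyckWord, M.2.1.semilength_toDyckWord⟩
  have h_inj : Function.Injective toDyck := fun M M' h =>
    Subtype.ext <| M.2.eq_of_image_fst_eq M'.2 <|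
      M.2.1.image_fst_eq_of_toDyckWord_eq M'.2.1 (congrArg Subtype.val h)
  simpa [Nat.card_eq_fintype_card, DyckWord.card_dyckWord_semilength_eq_catalan] using
    Nat.card_le_card_of_injective toDyck h_inj

section Words

variable {A : Type*} {n : ℕ} {M : Finset (Fin (2 * n) × Fin (2 * n))} {comp : A → A}

lemma IsValidF.eq_of_eqOn_image_fst {P Q : Fin (2 * n) → A} (hM : IsMatchingF n M)
    (hP : IsValidF n P comp M) (hQ : IsValidF n Q comp M)
    (h : ∀ i ∈ M.image Prod.fst, P i = Q i) : P = Q := by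
  funext k
  by_cases hk : k ∈ M.image Prod.fst
  · exact h k hk
  · obtain ⟨p, hp, rfl⟩ := Finset.mem_image.1 (hM.mem_image_snd_iff.2 hk)
    rw [hP p hp, hQ p hp, h p.1 (Finset.mem_image_of_mem _ hp)]

lemma IsMatchingF.card_isValidF_le [Fintype A] (hM : IsMatchingF n M) (comp : A → A) :
    Nat.card {P // IsValidF n P comp M} ≤ Fintype.card A ^ n := by
  let restrict (P : {P // IsValidF n P comp M}) : M.image Prod.fst → A := fun i => P.1 i
  have h_inj : Function.Injective restrict := fun P Q h =>
    Subtype.ext <| P.2.eq_of_eqOn_image_fst hM Q.2 fun i hi => congrFun h ⟨i, hi⟩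
  have := Nat.card_le_card_of_injective restrict h_inj
  rwa [Nat.card_fun, Nat.card_eq_fintype_card (α := A), Nat.card_eq_finsetCard,
    hM.card_image_fst] at this

end Words

lemma ncard_validWords_le {A : Type*} [Fintype A] (comp : A → A) (n : ℕ) :
    Set.ncard {P : Fin (2 * n) → A |
        ∃ M : Finset (Fin (2 * n) × Fin (2 * n)), IsPlaneTreeF n M ∧ IsValidF n P comp M}
      ≤ Fintype.card A ^ n * catalan n := by
  classical
  let glue (x : Σ M : {M // IsPlaneTreeF n M}, {P // IsValidF n P comp M.1}) :
      {P : Fin (2 * n) → A |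
        ∃ M : Finset (Fin (2 * n) × Fin (2 * n)), IsPlaneTreeF n M ∧ IsValidF n P comp M} :=
    ⟨x.2.1, x.1.1, x.1.2, x.2.2⟩
  have h_surj : Function.Surjective glue := fun ⟨P, M, hM, hP⟩ => ⟨⟨⟨M, hM⟩, ⟨P, hP⟩⟩, rfl⟩
  calc Set.ncard _ ≤ Nat.card (Σ M : {M // IsPlaneTreeF n M}, {P // IsValidF n P comp M.1}) :=
        Nat.card_le_card_of_surjective glue h_surj
    _ = ∑ M : {M // IsPlaneTreeF n M}, Nat.card {P // IsValidF n P comp M.1} := Nat.card_sigma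
    _ ≤ ∑ _M : {M // IsPlaneTreeF n M}, Fintype.card A ^ n :=
        Finset.sum_le_sum fun M _ => M.2.1.card_isValidF_le comp
    _ = Nat.card {M // IsPlaneTreeF n M} * Fintype.card A ^ n := by
        rw [Finset.sum_const, Finset.card_univ, smul_eq_mul, Nat.card_eq_fintype_card]
    _ ≤ Fintype.card A ^ n * catalan n := by
        rw [mul_comm]; exact Nat.mul_le_mul_left _ (card_planeTrees_le_catalan n)

lemma catalan_div_pow_le {q : ℝ} (hq : 4 ≤ q) (n : ℕ) :
    (catalan n : ℝ) / q ^ n ≤ 1 / (n + 1) := by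
  have h_binom : ((n + 1) * catalan n : ℝ) ≤ q ^ n := by
    calc ((n + 1) * catalan n : ℝ) = Nat.centralBinom n := by
          exact_mod_cast succ_mul_catalan_eq_centralBinom n
      _ ≤ 4 ^ n := by exact_mod_cast Nat.centralBinom_le_four_pow n
      _ ≤ q ^ n := by gcongr
  rw [div_le_div_iff₀ (by positivity) (by positivity)]
  linarith

theorem ratio_valid_words_tendsto_zero_general {A : Type*} [Fintype A] (m : ℕ)
    (hm : 2 ≤ m) (hcard : Fintype.card A = 2 * m)
    (comp : A → A) :
    (∀ n : ℕ, Set.ncard {P : Fin (2 * n) → A |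
        ∃ M : Finset (Fin (2 * n) × Fin (2 * n)),
          IsPlaneTreeF n M ∧ IsValidF n P comp M} ≤ (2 * m) ^ n * catalan n) ∧
    Filter.Tendsto (fun n : ℕ =>
        (Set.ncard {P : Fin (2 * n) → A |
          ∃ M : Finset (Fin (2 * n) × Fin (2 * n)),
            IsPlaneTreeF n M ∧ IsValidF n P comp M} : ℝ) / (2 * m) ^ (2 * n))
      Filter.atTop (nhds 0) := by
  have h_count (n : ℕ) := hcard ▸ ncard_validWords_le comp n
  refine ⟨h_count, squeeze_zero (fun n => by positivity) (fun n => ?_)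
    tendsto_one_div_add_atTop_nhds_zero_nat⟩
  have hq : (4 : ℝ) ≤ 2 * m := by exact_mod_cast (by omega : 4 ≤ 2 * m)
  calc _ ≤ ((2 * m) ^ n * catalan n : ℝ) / (2 * m) ^ (2 * n) := by
        gcongr; exact_mod_cast h_count n
    _ = catalan n / (2 * m) ^ n := by
        rw [two_mul n, pow_add, mul_div_mul_left _ _ (by positivity)]
    _ ≤ 1 / (n + 1) := catalan_div_pow_le hq n

/-- For an alphabet with `2m` letters (`m ≥ 2`), the number of
valid words of length `2n` is at most `(2m)^n · C_n`, and the proportion of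
valid words among all `(2m)^{2n}` words tends to `0` as `n → ∞`. -/
theorem ratio_valid_words_tendsto_zero {A : Type*} [Fintype A] (m : ℕ)
    (hm : 2 ≤ m) (hcard : Fintype.card A = 2 * m)
    (comp : A → A) (hinv : Function.Involutive comp) (hff : ∀ a, comp a ≠ a) :
    (∀ n : ℕ, Set.ncard {P : Fin (2 * n) → A |
        ∃ M : Finset (Fin (2 * n) × Fin (2 * n)),
          IsPlaneTreeF n M ∧ IsValidF n P comp M} ≤ (2 * m) ^ n * catalan n) ∧
    Filter.Tendsto (fun n : ℕ =>
        (Set.ncard {P : Fin (2 * n) → A |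
          ∃ M : Finset (Fin (2 * n) × Fin (2 * n)),
            IsPlaneTreeF n M ∧ IsValidF n P comp M} : ℝ) / (2 * m) ^ (2 * n))
      Filter.atTop (nhds 0) :=
  ratio_valid_words_tendsto_zero_general m hm hcard comp
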